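/- Let μ be a singular probability measure on ℝ whose support may be all of ℝ, let X be the complete metric space of 1-Lipschitz functions ℝ → ℝ with the supremum distance, and let f : [−1,1] → ℝ be a 1-Lipschitz function with f(0) = 0. Then for each positive integer n, the set A_n = {g ∈ X : μ(E^n_g) > 1 − n^{-1}} is open in X, where E^n_g = {x ∈ ℝ : ∃ρ < n^{-1} such that sup_{|y|≤1} |f(y) − ρ^{-1}(g(x+ρy) − g(x))| < n^{-1}}. -/
import Mathlib


open MeasureTheory ENNReal

/-- `E^n_g`: the set of points `x` at which `g` is `(1/n)`-close, at some scale
`ρ < 1/n`, to the model function `f`, in the sup norm on `[-1,1]`. -/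
def Eset (n : ℕ) (f g : ℝ → ℝ) : Set ℝ :=
  {x | ∃ ρ : ℝ, 0 < ρ ∧ ρ < (n : ℝ)⁻¹ ∧
    ∀ y ∈ Set.Icc (-1 : ℝ) 1, |f y - (g (x + ρ * y) - g x) / ρ| < (n : ℝ)⁻¹}

/-- Inner approximations to `Eset`: scale bounded below by `1/(k+1)` and a
margin of `1/(k+1)` in the sup-norm estimate. -/
def Fset (n : ℕ) (f g : ℝ → ℝ) (k : ℕ) : Set ℝ :=
  {x | ∃ ρ : ℝ, ((k : ℝ) + 1)⁻¹ ≤ ρ ∧ ρ < (n : ℝ)⁻¹ ∧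
    ∀ y ∈ Set.Icc (-1 : ℝ) 1,
      |f y - (g (x + ρ * y) - g x) / ρ| ≤ (n : ℝ)⁻¹ - ((k : ℝ) + 1)⁻¹}

lemma Fset_mono (n : ℕ) (f g : ℝ → ℝ) : Monotone (Fset n f g) := by
  intro k l hkl x hx
  obtain ⟨ρ, h1, h2, h3⟩ := hx
  have hle : ((l : ℝ) + 1)⁻¹ ≤ ((k : ℝ) + 1)⁻¹ := by
    apply inv_anti₀ (by positivity)
    exact_mod_cast by linarith [(Nat.cast_le (α := ℝ)).2 hkl]
  exact ⟨ρ, le_trans hle h1, h2, fun y hy => le_trans (h3 y hy) (by linarith)⟩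

lemma Eset_eq_iUnion (n : ℕ) (f : ℝ → ℝ) (hfc : ContinuousOn f (Set.Icc (-1) 1))
    (g : ℝ → ℝ) (hg : LipschitzWith 1 g) :
    Eset n f g = ⋃ k, Fset n f g k := by
  ext x
  constructor
  · rintro ⟨ρ, hρ0, hρn, hb⟩
    -- the function is continuous on the compact Icc, so the max is attained
    have hgc : Continuous g := hg.continuous
    have hc : ContinuousOn (fun y => |f y - (g (x + ρ * y) - g x) / ρ|) (Set.Icc (-1 : ℝ) 1) := by
      apply ContinuousOn.abs
      apply hfc.sub
      apply ContinuousOn.div_const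
      exact ((hgc.comp (by continuity)).continuousOn.sub continuousOn_const)
    obtain ⟨y₀, hy₀, hmax⟩ := isCompact_Icc.exists_isMaxOn (Set.nonempty_Icc.2 (by norm_num)) hc
    rw [isMaxOn_iff] at hmax
    set M := |f y₀ - (g (x + ρ * y₀) - g x) / ρ| with hM
    have hMlt : M < (n : ℝ)⁻¹ := hb y₀ hy₀
    have hε : 0 < min ((n : ℝ)⁻¹ - M) ρ := lt_min (by linarith) hρ0
    obtain ⟨k, hk⟩ := exists_nat_gt (min ((n : ℝ)⁻¹ - M) ρ)⁻¹
    have hk1 : ((k : ℝ) + 1)⁻¹ ≤ min ((n : ℝ)⁻¹ - M) ρ := by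
      rw [inv_le_comm₀ (by positivity) hε]
      linarith
    refine Set.mem_iUnion.2 ⟨k, ρ, le_trans hk1 (min_le_right _ _), hρn, fun y hy => ?_⟩
    have := hmax y hy
    have h2 : ((k : ℝ) + 1)⁻¹ ≤ (n : ℝ)⁻¹ - M := le_trans hk1 (min_le_left _ _)
    linarith
  · intro hx
    obtain ⟨k, ρ, h1, h2, h3⟩ := Set.mem_iUnion.1 hx
    have hk : (0 : ℝ) < ((k : ℝ) + 1)⁻¹ := by positivity
    exact ⟨ρ, lt_of_lt_of_le hk h1, h2, fun y hy => lt_of_le_of_lt (h3 y hy) (by linarith)⟩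

theorem stmt_8 (μ : Measure ℝ) [IsProbabilityMeasure μ]
    (hsing : μ ⟂ₘ (volume : Measure ℝ))
    (f : ℝ → ℝ) (hf : LipschitzOnWith 1 f (Set.Icc (-1) 1)) (hf0 : f 0 = 0)
    (n : ℕ) (hn : 0 < n)
    (g : ℝ → ℝ) (hg : LipschitzWith 1 g)
    (hμ : 1 - (n : ℝ≥0∞)⁻¹ < μ (Eset n f g)) :
    ∃ δ : ℝ, 0 < δ ∧ ∀ h : ℝ → ℝ, LipschitzWith 1 h →
      (∀ x, |h x - g x| < δ) → 1 - (n : ℝ≥0∞)⁻¹ < μ (Eset n f h) := by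
  rw [Eset_eq_iUnion n f hf.continuousOn g hg,
    ((Fset_mono n f g).directed_le).measure_iUnion, lt_iSup_iff] at hμ
  obtain ⟨k, hk⟩ := hμ
  refine ⟨(4 * ((k : ℝ) + 1) ^ 2)⁻¹, by positivity, fun h hh hclose => ?_⟩
  refine lt_of_lt_of_le hk (measure_mono ?_)
  rintro x ⟨ρ, h1, h2, h3⟩
  have hk1 : (0 : ℝ) < (k : ℝ) + 1 := by positivity
  have hρ0 : 0 < ρ := lt_of_lt_of_le (by positivity) h1
  refine ⟨ρ, hρ0, h2, fun y hy => ?_⟩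
  have key : |(h (x + ρ * y) - h x) / ρ - (g (x + ρ * y) - g x) / ρ| ≤ (2 * ((k : ℝ) + 1))⁻¹ := by
    rw [div_sub_div_same, abs_div, abs_of_pos hρ0]
    have e1 : |h (x + ρ * y) - g (x + ρ * y)| < (4 * ((k : ℝ) + 1) ^ 2)⁻¹ := hclose _
    have e2 : |h x - g x| < (4 * ((k : ℝ) + 1) ^ 2)⁻¹ := hclose _
    have habs : |h (x + ρ * y) - h x - (g (x + ρ * y) - g x)| ≤ 2 * (4 * ((k : ℝ) + 1) ^ 2)⁻¹ := by
      have : h (x + ρ * y) - h x - (g (x + ρ * y) - g x)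
          = (h (x + ρ * y) - g (x + ρ * y)) - (h x - g x) := by ring
      rw [this]
      calc _ ≤ |h (x + ρ * y) - g (x + ρ * y)| + |h x - g x| := abs_sub _ _
        _ ≤ _ := by linarith
    rw [div_le_iff₀ hρ0]
    calc |h (x + ρ * y) - h x - (g (x + ρ * y) - g x)| ≤ 2 * (4 * ((k : ℝ) + 1) ^ 2)⁻¹ := habs
      _ = (2 * ((k : ℝ) + 1))⁻¹ * ((k : ℝ) + 1)⁻¹ := by
        field_simp
        ring
      _ ≤ (2 * ((k : ℝ) + 1))⁻¹ * ρ :=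
        mul_le_mul_of_nonneg_left h1 (by positivity)
  have half_lt : (2 * ((k : ℝ) + 1))⁻¹ < ((k : ℝ) + 1)⁻¹ := by
    apply inv_strictAnti₀ hk1
    linarith
  calc |f y - (h (x + ρ * y) - h x) / ρ|
      ≤ |f y - (g (x + ρ * y) - g x) / ρ|
        + |(h (x + ρ * y) - h x) / ρ - (g (x + ρ * y) - g x) / ρ| := by
        have : f y - (h (x + ρ * y) - h x) / ρ
            = (f y - (g (x + ρ * y) - g x) / ρ)
              - ((h (x + ρ * y) - h x) / ρ - (g (x + ρ * y) - g x) / ρ) := by ring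
        rw [this]; exact abs_sub _ _
    _ ≤ ((n : ℝ)⁻¹ - ((k : ℝ) + 1)⁻¹) + (2 * ((k : ℝ) + 1))⁻¹ := add_le_add (h3 y hy) key
    _ < (n : ℝ)⁻¹ := by linarith
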